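/- arXiv:2410.07483 — 2 statements merged into one kernel-verified Lean document; each statement's English description precedes it below -/
import Mathlib

section
/- (Conditional bias formula under violation of principal ignorability.) Fix z ∈ {1,...,J} and assume monotonicity, that e_{g′}(X) > 0 P-a.s. for every g′ ∈ {J−z+1,...,J}, and that the bounded measurable sensitivity functions δ_{z,g′} : 𝒳 → ℝ (g′ ∈ {J−z+1,...,J}) satisfy δ_{z,J}(X) = 1 and E[Y_z·1(G=g′) | σ(X)]·e_J(X) = δ_{z,g′}(X)·E[Y_z·1(G=J) | σ(X)]·e_{g′}(X) P-a.s. Then for every g ∈ {J−z+1,...,J}: E[Y_z·1(G=g) | σ(X)]·Σ_{g′=J−z+1}^J δ_{z,g′}(X)·e_{g′}(X) = δ_{z,g}(X)·e_g(X)·E[Y_z·S_z | σ(X)] P-almost surely. -/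
/-!
Under monotonicity the survivors under treatment `z` are exactly the strata `G ≥ J - z + 1`, so
`S_z = ∑_{g' ≥ J - z + 1} 1(G = g')` and `E[Y_z S_z | X]` splits into the stratum terms
`E[Y_z 1(G = g') | X]`. After multiplication by `e_J(X) > 0` the sensitivity relation makes each
stratum term proportional to `δ_{z,g'}(X) e_{g'}(X)`, with the common factor
`E[Y_z 1(G = J) | X]`; both sides of the formula then agree, and `e_J(X)` cancels.
-/

open MeasureTheory ProbabilityTheory

noncomputable section

namespace TruncationByDeath

variable {Ω : Type*} {𝒳 : Type*} [MeasurableSpace Ω] [MeasurableSpace 𝒳]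

/-- The σ-algebra on `Ω` generated by the covariate map `X`. -/
def mX (X : Ω → 𝒳) : MeasurableSpace Ω := MeasurableSpace.comap X inferInstance

/-- Real-valued indicator of the event `{Z = z}`. -/
def indic (Z : Ω → ℕ) (z : ℕ) : Ω → ℝ := fun ω => if Z ω = z then 1 else 0

/-- Observed survival status `S := ∑_z 1(Z=z) ⬝ S_z`. -/
def Sobs (J : ℕ) (Z : Ω → ℕ) (S : ℕ → Ω → ℝ) : Ω → ℝ :=
  fun ω => ∑ z ∈ Finset.Icc 1 J, indic Z z ω * S z ω

/-- Observed outcome `Y := ∑_z 1(Z=z) ⬝ Y_z`. -/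
def Yobs (J : ℕ) (Z : Ω → ℕ) (Y : ℕ → Ω → ℝ) : Ω → ℝ :=
  fun ω => ∑ z ∈ Finset.Icc 1 J, indic Z z ω * Y z ω

/-- Principal score `p_z(X) := E[S_z | σ(X)]`, with conventions `p_0 := 0` and `p_{J+1} := 1`. -/
def pscore (P : Measure Ω) (X : Ω → 𝒳) (S : ℕ → Ω → ℝ) (J : ℕ) (z : ℕ) : Ω → ℝ :=
  if z = 0 then fun _ => 0 else if z = J + 1 then fun _ => 1 else P[S z | mX X]

/-- Treatment probability `π_z := P(Z = z)`. -/
def piZ (P : Measure Ω) (Z : Ω → ℕ) (z : ℕ) : ℝ := (P {ω | Z ω = z}).toReal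

/-- Principal stratum variable `G := ∑_{z=1}^J S_z`. -/
def Gsum (J : ℕ) (S : ℕ → Ω → ℝ) : Ω → ℝ := fun ω => ∑ z ∈ Finset.Icc 1 J, S z ω

/-- Real-valued indicator of the event `{G = g}`. -/
def indG (J : ℕ) (S : ℕ → Ω → ℝ) (g : ℕ) : Ω → ℝ :=
  Set.indicator {ω | Gsum J S ω = (g : ℝ)} (fun _ => (1 : ℝ))

/-- Principal score of the stratum `g` : `e_g(X) := E[1(G=g) | σ(X)]`. -/
def eg (P : Measure Ω) (X : Ω → 𝒳) (J : ℕ) (S : ℕ → Ω → ℝ) (g : ℕ) : Ω → ℝ :=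
  P[indG J S g | mX X]

/-- Basic setup: measurability, ranges, values and integrability of the primitives. -/
structure Setup (P : Measure Ω) (J : ℕ) (X : Ω → 𝒳) (Z : Ω → ℕ)
    (S Y : ℕ → Ω → ℝ) : Prop where
  hJ : 2 ≤ J
  hX : Measurable X
  hZ : Measurable Z
  hZr : ∀ ω, Z ω ∈ Finset.Icc 1 J
  hSm : ∀ z, Measurable (S z)
  hS01 : ∀ z ω, S z ω = 0 ∨ S z ω = 1
  hYm : ∀ z, Measurable (Y z)
  hYint : ∀ z, Integrable (Y z) P

/-- Randomization : `Z` is independent of `(X, S_1,…,S_J, Y_1,…,Y_J)` and `π_z > 0` for all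
`z ∈ {1,…,J}`. -/
def Randomization (P : Measure Ω) (J : ℕ) (X : Ω → 𝒳) (Z : Ω → ℕ)
    (S Y : ℕ → Ω → ℝ) : Prop :=
  IndepFun Z (fun ω => (X ω, fun z => S z ω, fun z => Y z ω)) P ∧
    ∀ z ∈ Finset.Icc 1 J, 0 < piZ P Z z

/-- Monotonicity : `S_{z'} ≤ S_z` a.s. whenever `z' ≤ z`. -/
def Monotonicity (P : Measure Ω) (J : ℕ) (S : ℕ → Ω → ℝ) : Prop :=
  ∀ z ∈ Finset.Icc 1 J, ∀ z' ∈ Finset.Icc 1 J, z' ≤ z → ∀ᵐ ω ∂P, S z' ω ≤ S z ω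

/-- Principal ignorability. -/
def PrincipalIgnorability (P : Measure Ω) (J : ℕ) (X : Ω → 𝒳)
    (S Y : ℕ → Ω → ℝ) : Prop :=
  ∀ z ∈ Finset.Icc 1 J, ∀ g ∈ Finset.Icc (J - z + 1) J, ∀ g' ∈ Finset.Icc (J - z + 1) J,
    (fun ω => (P[fun ω' => Y z ω' * indG J S g ω' | mX X]) ω * eg P X J S g' ω)
      =ᵐ[P] fun ω => (P[fun ω' => Y z ω' * indG J S g' ω' | mX X]) ω * eg P X J S g ω

/-- Positivity : the principal scores are uniformly bounded away from zero. -/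
def Positivity (P : Measure Ω) (J : ℕ) (X : Ω → 𝒳) (S : ℕ → Ω → ℝ) : Prop :=
  ∃ c : ℝ, 0 < c ∧ ∀ z ∈ Finset.Icc 1 J, ∀ᵐ ω ∂P, c ≤ pscore P X S J z ω

section Survival

variable {J z : ℕ} {s : ℕ → ℝ}

lemma sum_Icc_eq_card_filter (h01 : ∀ i, s i = 0 ∨ s i = 1) :
    ∑ i ∈ Finset.Icc 1 J, s i = ((Finset.Icc 1 J).filter (s · = 1)).card := by
  rw [Finset.natCast_card_filter]
  refine Finset.sum_congr rfl fun i _ => ?_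
  rcases h01 i with h | h <;> simp [h]

lemma card_filter_le_of_eq_zero (hs : MonotoneOn s (Set.Icc 1 J)) (hz : z ∈ Set.Icc 1 J)
    (h0 : s z = 0) : ((Finset.Icc 1 J).filter (s · = 1)).card ≤ J - z := by
  have hsub : (Finset.Icc 1 J).filter (s · = 1) ⊆ Finset.Icc (z + 1) J := by
    intro i hi
    obtain ⟨hiJ, hi1⟩ := Finset.mem_filter.1 hi
    rw [Finset.mem_Icc] at hiJ ⊢
    refine ⟨Nat.lt_of_not_le fun hiz => ?_, hiJ.2⟩
    have := hs hiJ hz hiz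
    rw [hi1, h0] at this
    norm_num at this
  simpa using Finset.card_le_card hsub

lemma le_card_filter_of_eq_one (h01 : ∀ i, s i = 0 ∨ s i = 1)
    (hs : MonotoneOn s (Set.Icc 1 J)) (hz : z ∈ Set.Icc 1 J) (h1 : s z = 1) :
    J + 1 - z ≤ ((Finset.Icc 1 J).filter (s · = 1)).card := by
  have hsub : Finset.Icc z J ⊆ (Finset.Icc 1 J).filter (s · = 1) := by
    intro i hi
    rw [Finset.mem_Icc] at hi
    have hiJ : i ∈ Set.Icc 1 J := ⟨hz.1.trans hi.1, hi.2⟩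
    refine Finset.mem_filter.2 ⟨Finset.mem_Icc.2 hiJ, ?_⟩
    have := hs hz hiJ hi.1
    rcases h01 i with h | h
    · rw [h, h1] at this; norm_num at this
    · exact h
  simpa using Finset.card_le_card hsub

end Survival

section Strata

variable {J : ℕ}

lemma S_eq_sum_indG {α : Type*} {S : ℕ → α → ℝ} {z : ℕ} {a : α}
    (h01 : ∀ i, S i a = 0 ∨ S i a = 1) (hmono : MonotoneOn (S · a) (Set.Icc 1 J))
    (hz : z ∈ Finset.Icc 1 J) :
    S z a = ∑ g ∈ Finset.Icc (J - z + 1) J, indG J S g a := by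
  have hz' : z ∈ Set.Icc 1 J := by simpa using hz
  obtain ⟨hz1, hzJ⟩ := Finset.mem_Icc.1 hz
  set n := ((Finset.Icc 1 J).filter (S · a = 1)).card
  have hG : Gsum J S a = n := sum_Icc_eq_card_filter h01
  have hsum : ∑ g ∈ Finset.Icc (J - z + 1) J, indG J S g a
      = if n ∈ Finset.Icc (J - z + 1) J then 1 else 0 := by
    simp [indG, Set.indicator_apply, hG, Finset.sum_ite_eq]
  have hnJ : n ≤ J := (Finset.card_filter_le _ _).trans (by simp)
  rw [hsum]
  rcases h01 z with h | h
  · have := card_filter_le_of_eq_zero hmono hz' h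
    rw [if_neg (by simp only [Finset.mem_Icc]; omega), h]
  · have := le_card_filter_of_eq_one h01 hmono hz' h
    rw [if_pos (by simp only [Finset.mem_Icc]; omega), h]

lemma Monotonicity.ae_monotoneOn {P : Measure Ω} {S : ℕ → Ω → ℝ} (h : Monotonicity P J S) :
    ∀ᵐ ω ∂P, MonotoneOn (S · ω) (Set.Icc 1 J) := by
  have : ∀ᵐ ω ∂P, ∀ a ∈ Finset.Icc 1 J, ∀ b ∈ Finset.Icc 1 J, a ≤ b → S a ω ≤ S b ω := by
    simp only [Filter.eventually_all_finset, Filter.eventually_imp_distrib_left]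
    exact fun a ha b hb hab => h b hb a ha hab
  filter_upwards [this] with ω hω a ha b hb hab
  exact hω a (by simpa using ha) b (by simpa using hb) hab

lemma mul_indG_eq_indicator {α : Type*} (S : ℕ → α → ℝ) (f : α → ℝ) (g : ℕ) :
    (fun a => f a * indG J S g a) = {a | Gsum J S a = g}.indicator f := by
  ext a
  simp [indG, Set.indicator_apply]

lemma integrable_mul_indG {P : Measure Ω} {S : ℕ → Ω → ℝ} {f : Ω → ℝ}
    (hS : ∀ i, Measurable (S i)) (hf : Integrable f P) (g : ℕ) :
    Integrable (fun ω => f ω * indG J S g ω) P := by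
  rw [mul_indG_eq_indicator]
  exact hf.indicator (Finset.measurable_sum _ (fun i _ => hS i) (measurableSet_singleton _))

lemma condExp_mul_S_eq_sum_condExp_mul_indG {P : Measure Ω} {X : Ω → 𝒳} {S : ℕ → Ω → ℝ}
    {f : Ω → ℝ} {z : ℕ} (hf : Integrable f P) (h01 : ∀ i ω, S i ω = 0 ∨ S i ω = 1)
    (hS : ∀ i, Measurable (S i)) (hmono : ∀ᵐ ω ∂P, MonotoneOn (S · ω) (Set.Icc 1 J))
    (hz : z ∈ Finset.Icc 1 J) :
    P[fun ω => f ω * S z ω | mX X] =ᵐ[P]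
      fun ω => ∑ g ∈ Finset.Icc (J - z + 1) J, P[fun ω' => f ω' * indG J S g ω' | mX X] ω := by
  calc P[fun ω => f ω * S z ω | mX X]
      =ᵐ[P] P[∑ g ∈ Finset.Icc (J - z + 1) J, fun ω => f ω * indG J S g ω | mX X] := by
        refine condExp_congr_ae ?_
        filter_upwards [hmono] with ω hω
        rw [S_eq_sum_indG (h01 · ω) hω hz, Finset.mul_sum, Finset.sum_apply]
    _ =ᵐ[P] ∑ g ∈ Finset.Icc (J - z + 1) J, P[fun ω => f ω * indG J S g ω | mX X] :=
        condExp_finsetSum (fun g _ => integrable_mul_indG hS hf g) (mX X)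
    _ = _ := by
        ext ω
        rw [Finset.sum_apply]

end Strata

lemma mul_sum_eq_mul_sum_of_mul_eq {ι K : Type*} [Field K] {s : Finset ι} {a d e : ι → K}
    {b c : K} (hc : c ≠ 0) (h : ∀ i ∈ s, a i * c = d i * b * e i) {i : ι} (hi : i ∈ s) :
    a i * ∑ j ∈ s, d j * e j = d i * e i * ∑ j ∈ s, a j := by
  refine mul_right_cancel₀ hc ?_
  calc a i * (∑ j ∈ s, d j * e j) * c
      = d i * e i * ∑ j ∈ s, d j * b * e j := by
        rw [mul_right_comm, h i hi, Finset.mul_sum, Finset.mul_sum]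
        exact Finset.sum_congr rfl fun j _ => by ring
    _ = d i * e i * ∑ j ∈ s, a j * c := by rw [Finset.sum_congr rfl h]
    _ = d i * e i * (∑ j ∈ s, a j) * c := by rw [← Finset.sum_mul]; ring

theorem statement16_general (P : Measure Ω) (J : ℕ)
    (X : Ω → 𝒳) (Z : Ω → ℕ) (S Y : ℕ → Ω → ℝ)
    (hset : Setup P J X Z S Y)
    (hmono : Monotonicity P J S)
    (z : ℕ) (hz : z ∈ Finset.Icc 1 J)
    (hepos : ∀ g' ∈ Finset.Icc (J - z + 1) J, ∀ᵐ ω ∂P, 0 < eg P X J S g' ω)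
    (δ : ℕ → 𝒳 → ℝ)
    (hδdef : ∀ g' ∈ Finset.Icc (J - z + 1) J,
      (fun ω => (P[fun ω' => Y z ω' * indG J S g' ω' | mX X]) ω * eg P X J S J ω)
        =ᵐ[P] fun ω =>
          δ g' (X ω) * (P[fun ω' => Y z ω' * indG J S J ω' | mX X]) ω * eg P X J S g' ω) :
    ∀ g ∈ Finset.Icc (J - z + 1) J,
      (fun ω => (P[fun ω' => Y z ω' * indG J S g ω' | mX X]) ω
          * ∑ g' ∈ Finset.Icc (J - z + 1) J, δ g' (X ω) * eg P X J S g' ω)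
        =ᵐ[P] fun ω =>
          δ g (X ω) * eg P X J S g ω * (P[fun ω' => Y z ω' * S z ω' | mX X]) ω := by
  intro g hg
  obtain ⟨hz1, hzJ⟩ := Finset.mem_Icc.1 hz
  have hJ : J ∈ Finset.Icc (J - z + 1) J := Finset.mem_Icc.2 ⟨by omega, le_rfl⟩
  filter_upwards [condExp_mul_S_eq_sum_condExp_mul_indG (X := X) (hset.hYint z) hset.hS01 hset.hSm
      hmono.ae_monotoneOn hz, (Filter.eventually_all_finset _).2 hδdef, hepos J hJ]
    with ω hsum hδ heJ
  rw [hsum]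
  exact mul_sum_eq_mul_sum_of_mul_eq heJ.ne' hδ hg

/-- **conditional bias formula under violation of principal ignorability.**
With reference stratum `J` and sensitivity functions `δ_{z,g'}`, for every
`g ∈ {J−z+1,…,J}`,
`E[Y_z·1(G=g)|σ(X)] · ∑_{g'} δ_{z,g'}(X)·e_{g'}(X) = δ_{z,g}(X)·e_g(X)·E[Y_z·S_z|σ(X)]`
`P`-almost surely. -/
theorem statement16 (P : Measure Ω) [IsProbabilityMeasure P] (J : ℕ)
    (X : Ω → 𝒳) (Z : Ω → ℕ) (S Y : ℕ → Ω → ℝ)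
    (hset : Setup P J X Z S Y)
    (hmono : Monotonicity P J S)
    (z : ℕ) (hz : z ∈ Finset.Icc 1 J)
    (hepos : ∀ g' ∈ Finset.Icc (J - z + 1) J, ∀ᵐ ω ∂P, 0 < eg P X J S g' ω)
    (δ : ℕ → 𝒳 → ℝ)
    (hδm : ∀ g' ∈ Finset.Icc (J - z + 1) J, Measurable (δ g'))
    (hδb : ∀ g' ∈ Finset.Icc (J - z + 1) J, ∃ C, ∀ x, |δ g' x| ≤ C)
    (hδJ : ∀ x, δ J x = 1)
    (hδdef : ∀ g' ∈ Finset.Icc (J - z + 1) J,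
      (fun ω => (P[fun ω' => Y z ω' * indG J S g' ω' | mX X]) ω * eg P X J S J ω)
        =ᵐ[P] fun ω =>
          δ g' (X ω) * (P[fun ω' => Y z ω' * indG J S J ω' | mX X]) ω * eg P X J S g' ω) :
    ∀ g ∈ Finset.Icc (J - z + 1) J,
      (fun ω => (P[fun ω' => Y z ω' * indG J S g ω' | mX X]) ω
          * ∑ g' ∈ Finset.Icc (J - z + 1) J, δ g' (X ω) * eg P X J S g' ω)
        =ᵐ[P] fun ω =>
          δ g (X ω) * eg P X J S g ω * (P[fun ω' => Y z ω' * S z ω' | mX X]) ω :=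
  statement16_general P J X Z S Y hset hmono z hz hepos δ hδdef

end TruncationByDeath
end
end

section
/- (Identification of principal scores without monotonicity.) Fix a reference index r ∈ {0,...,J} and assume e_{𝔤_r}(X) ≥ c > 0 P-a.s. For 𝔤 ∉ 𝒬 set ρ_𝔤(X) := e_𝔤(X)/e_{𝔤_r}(X); for w ∈ {1,...,J} set q_w(X) := Σ_{𝔤∉𝒬: 𝔤(w)=1} ρ_𝔤(X), with q_0(X) := 0 and q_{J+1}(X) := Σ_{𝔤∉𝒬} ρ_𝔤(X). Then P-almost surely: (a) e_{𝔤_r}(X)·(1 + q_{J−r+1}(X) − q_{J−r}(X)) = p_{J−r+1}(X) − p_{J−r}(X); (b) for every 𝔤 ∉ 𝒬, e_𝔤(X)·(1 + q_{J−r+1}(X) − q_{J−r}(X)) = ρ_𝔤(X)·(p_{J−r+1}(X) − p_{J−r}(X)); and (c) for every g ∈ {0,...,J}, e_{𝔤_g}(X) = p_{J−g+1}(X) − p_{J−g}(X) − e_{𝔤_r}(X)·(q_{J−g+1}(X) − q_{J−g}(X)). -/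
open MeasureTheory ProbabilityTheory

noncomputable section

namespace TruncationByDeath

variable {Ω : Type*} {𝒳 : Type*} [MeasurableSpace Ω] [MeasurableSpace 𝒳]

/-- Without monotonicity: indicator of the principal stratum described by the set
`A ⊆ {1,…,J}` of treatment levels under which the unit survives. -/
def indGv (J : ℕ) (S : ℕ → Ω → ℝ) (A : Finset ℕ) : Ω → ℝ :=
  Set.indicator {ω | ∀ w ∈ Finset.Icc 1 J, (S w ω = 1 ↔ w ∈ A)} (fun _ => (1 : ℝ))

/-- Principal score of the stratum `A` : `e_A(X) := E[1(G=A) | σ(X)]`. -/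
def egv (P : Measure Ω) (X : Ω → 𝒳) (J : ℕ) (S : ℕ → Ω → ℝ) (A : Finset ℕ) : Ω → ℝ :=
  P[indGv J S A | mX X]

/-- The monotone stratum `𝔤_g`, surviving exactly under levels `z ≥ J − g + 1`. -/
def monoPattern (J g : ℕ) : Finset ℕ := Finset.Icc (J - g + 1) J

/-- The collection `𝒬` of monotone strata. -/
def Qset (J : ℕ) : Finset (Finset ℕ) := (Finset.Icc 0 J).image (monoPattern J)

/-- All principal strata (subsets of `{1,…,J}`). -/
def stratSet (J : ℕ) : Finset (Finset ℕ) := (Finset.Icc 1 J).powerset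

/-- The harmed strata `𝒢 ∖ 𝒬`. -/
def nonQ (J : ℕ) : Finset (Finset ℕ) := (stratSet J).filter (fun A => A ∉ Qset J)

/-- Sensitivity ratio `ρ_A(X) := e_A(X)/e_{𝔤_r}(X)`. -/
def rhoA (P : Measure Ω) (X : Ω → 𝒳) (J r : ℕ) (S : ℕ → Ω → ℝ) (A : Finset ℕ) : Ω → ℝ :=
  fun ω => egv P X J S A ω / egv P X J S (monoPattern J r) ω

/-- `q_w(X) := ∑_{A ∉ 𝒬, w ∈ A} ρ_A(X)` for `w ∈ {1,…,J}`, with `q_0 := 0` and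
`q_{J+1} := ∑_{A ∉ 𝒬} ρ_A(X)`. -/
def qfun (P : Measure Ω) (X : Ω → 𝒳) (J r : ℕ) (S : ℕ → Ω → ℝ) (w : ℕ) : Ω → ℝ :=
  if w = 0 then fun _ => 0
  else if w ≤ J then
    fun ω => ∑ A ∈ (nonQ J).filter (fun A => w ∈ A), rhoA P X J r S A ω
  else fun ω => ∑ A ∈ nonQ J, rhoA P X J r S A ω

/-! Writing `1` and each `S_z` as sums of stratum indicators and conditioning on `X`, the
principal score `p_z` becomes the sum of `e_A` over the strata `A` that survive under `z`.
Among the monotone strata exactly `𝔤_g, g ≥ J + 1 - z` survive under `z`, so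
`p_{J-g+1} - p_{J-g}` is `e_{𝔤_g}` plus a difference of sums over harmed strata, and on
`{e_{𝔤_r} > 0}` those sums are `e_{𝔤_r} q_{J-g+1}` and `e_{𝔤_r} q_{J-g}`. This is (c); (a) is
(c) at `g = r`, and (b) is (a) multiplied by `ρ_A`. -/

/-- The strata surviving under treatment level `z`, with the conventions `p_0 = 0` and
`p_{J+1} = 1` built in. -/
def survivingStrata (J z : ℕ) : Finset (Finset ℕ) :=
  if z = 0 then ∅ else if z ≤ J then (stratSet J).filter (z ∈ ·) else stratSet J

def harmedSurvivingStrata (J z : ℕ) : Finset (Finset ℕ) :=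
  (survivingStrata J z).filter (· ∉ Qset J)

def stratumAt {α : Type*} (J : ℕ) (S : ℕ → α → ℝ) (ω : α) : Finset ℕ :=
  (Finset.Icc 1 J).filter (S · ω = 1)

section Strata

variable {J : ℕ}

lemma survivingStrata_subset_stratSet (z : ℕ) : survivingStrata J z ⊆ stratSet J := by
  unfold survivingStrata
  split_ifs
  exacts [Finset.empty_subset _, Finset.filter_subset _ _, subset_rfl]

lemma monoPattern_mem_stratSet (g : ℕ) : monoPattern J g ∈ stratSet J :=
  Finset.mem_powerset.mpr fun w hw => by
    simp only [monoPattern, Finset.mem_Icc] at hw ⊢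
    omega

lemma card_monoPattern {g : ℕ} (hg : g ≤ J) : (monoPattern J g).card = g := by
  rw [monoPattern, Nat.card_Icc]
  omega

lemma injOn_monoPattern : Set.InjOn (monoPattern J) (Finset.Icc 0 J) := by
  intro a ha b hb h
  rw [Finset.coe_Icc, Set.mem_Icc] at ha hb
  rw [← card_monoPattern ha.2, ← card_monoPattern hb.2, h]

lemma monoPattern_mem_survivingStrata_iff {g z : ℕ} (hg : g ≤ J) (hz : z ≤ J + 1) :
    monoPattern J g ∈ survivingStrata J z ↔ J + 1 - z ≤ g := by
  unfold survivingStrata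
  split_ifs with h0 hzJ
  · simp only [Finset.notMem_empty, false_iff]
    omega
  · rw [Finset.mem_filter, and_iff_right (monoPattern_mem_stratSet g), monoPattern,
      Finset.mem_Icc]
    omega
  · simp only [monoPattern_mem_stratSet, true_iff]
    omega

lemma filter_survivingStrata_mem_Qset {z : ℕ} (hz : z ≤ J + 1) :
    (survivingStrata J z).filter (· ∈ Qset J)
      = (Finset.Icc (J + 1 - z) J).image (monoPattern J) := by
  ext A
  rw [Finset.mem_filter]
  simp only [Qset, Finset.mem_image, Finset.mem_Icc]
  constructor
  · rintro ⟨hA, g, hg, rfl⟩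
    exact ⟨g, ⟨(monoPattern_mem_survivingStrata_iff hg.2 hz).mp hA, hg.2⟩, rfl⟩
  · rintro ⟨g, hg, rfl⟩
    exact ⟨(monoPattern_mem_survivingStrata_iff hg.2 hz).mpr hg.1, g, ⟨g.zero_le, hg.2⟩, rfl⟩

lemma sum_survivingStrata {M : Type*} [AddCommMonoid M] (f : Finset ℕ → M) {z : ℕ}
    (hz : z ≤ J + 1) :
    ∑ A ∈ survivingStrata J z, f A
      = ∑ g ∈ Finset.Icc (J + 1 - z) J, f (monoPattern J g)
        + ∑ A ∈ harmedSurvivingStrata J z, f A := by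
  rw [← Finset.sum_filter_add_sum_filter_not _ (· ∈ Qset J),
    filter_survivingStrata_mem_Qset hz,
    Finset.sum_image (injOn_monoPattern.mono (by simp [Set.subset_def])), harmedSurvivingStrata]

end Strata

section StratumIndicators

variable {α : Type*} {J : ℕ} {S : ℕ → α → ℝ}

lemma stratumAt_mem_stratSet (S : ℕ → α → ℝ) (ω : α) : stratumAt J S ω ∈ stratSet J :=
  Finset.mem_powerset.mpr (Finset.filter_subset _ _)

lemma measurableSet_stratum [MeasurableSpace α] (hS : ∀ z, Measurable (S z)) (A : Finset ℕ) :
    MeasurableSet {ω | ∀ w ∈ Finset.Icc 1 J, (S w ω = 1 ↔ w ∈ A)} := by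
  simp only [Set.ofPred_forall]
  refine MeasurableSet.biInter (Set.to_countable _) fun w _ => ?_
  by_cases hw : w ∈ A
  · simp only [hw, iff_true]
    exact hS w (measurableSet_singleton 1)
  · simp only [hw, iff_false]
    exact (hS w (measurableSet_singleton 1)).compl

lemma integrable_indGv [MeasurableSpace α] (P : Measure α) [IsFiniteMeasure P]
    (hS : ∀ z, Measurable (S z)) (A : Finset ℕ) : Integrable (indGv J S A) P :=
  (integrable_const (1 : ℝ)).indicator (measurableSet_stratum hS A)

lemma indGv_eq_ite {A : Finset ℕ} (hA : A ∈ stratSet J) (ω : α) :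
    indGv J S A ω = if stratumAt J S ω = A then 1 else 0 := by
  have hsub : A ⊆ Finset.Icc 1 J := Finset.mem_powerset.mp hA
  have hiff : (∀ w ∈ Finset.Icc 1 J, (S w ω = 1 ↔ w ∈ A)) ↔ stratumAt J S ω = A := by
    simp only [Finset.ext_iff, stratumAt, Finset.mem_filter]
    exact ⟨fun h w => ⟨fun hw => (h w hw.1).mp hw.2,
        fun hw => ⟨hsub hw, (h w (hsub hw)).mpr hw⟩⟩,
      fun h w hw => ⟨fun hS => (h w).mp ⟨hw, hS⟩, fun hwA => ((h w).mpr hwA).2⟩⟩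
  simp only [indGv, Set.indicator_apply, Set.mem_ofPred_eq, hiff]

lemma sum_indGv_eq_ite {s : Finset (Finset ℕ)} (hs : s ⊆ stratSet J) (ω : α) :
    ∑ A ∈ s, indGv J S A ω = if stratumAt J S ω ∈ s then 1 else 0 := by
  rw [Finset.sum_congr rfl fun A hA => indGv_eq_ite (hs hA) ω, Finset.sum_ite_eq]

lemma sum_indGv_survivingStrata (hS01 : ∀ z ω, S z ω = 0 ∨ S z ω = 1) {z : ℕ} (ω : α) :
    ∑ A ∈ survivingStrata J z, indGv J S A ω
      = if z = 0 then 0 else if z ≤ J then S z ω else 1 := by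
  rw [sum_indGv_eq_ite (survivingStrata_subset_stratSet z), survivingStrata]
  by_cases h0 : z = 0
  · simp [h0]
  by_cases hzJ : z ≤ J
  · have hmem : stratumAt J S ω ∈ (stratSet J).filter (z ∈ ·) ↔ S z ω = 1 := by
      rw [Finset.mem_filter, and_iff_right (stratumAt_mem_stratSet S ω), stratumAt,
        Finset.mem_filter, Finset.mem_Icc]
      exact and_iff_right ⟨Nat.one_le_iff_ne_zero.mpr h0, hzJ⟩
    rcases hS01 z ω with h | h <;> simp [h0, hzJ, hmem, h]
  · simp [h0, hzJ, stratumAt_mem_stratSet]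

end StratumIndicators

lemma qfun_eq_sum_rhoA (P : Measure Ω) (X : Ω → 𝒳) (J r : ℕ) (S : ℕ → Ω → ℝ) (w : ℕ)
    (ω : Ω) :
    qfun P X J r S w ω = ∑ A ∈ harmedSurvivingStrata J w, rhoA P X J r S A ω := by
  unfold qfun harmedSurvivingStrata survivingStrata nonQ
  split_ifs <;> simp [Finset.filter_comm]

lemma egv_mul_qfun {P : Measure Ω} {X : Ω → 𝒳} {J r : ℕ} {S : ℕ → Ω → ℝ} {ω : Ω}
    (hr : egv P X J S (monoPattern J r) ω ≠ 0) (w : ℕ) :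
    egv P X J S (monoPattern J r) ω * qfun P X J r S w ω
      = ∑ A ∈ harmedSurvivingStrata J w, egv P X J S A ω := by
  rw [qfun_eq_sum_rhoA, Finset.mul_sum]
  exact Finset.sum_congr rfl fun A _ => mul_div_cancel₀ _ hr

section PrincipalScores

variable {P : Measure Ω} [IsFiniteMeasure P] {X : Ω → 𝒳} {J : ℕ} {S : ℕ → Ω → ℝ}

lemma condExp_sum_indGv (hS : ∀ z, Measurable (S z)) (s : Finset (Finset ℕ)) :
    P[fun ω => ∑ A ∈ s, indGv J S A ω | mX X]
      =ᵐ[P] fun ω => ∑ A ∈ s, egv P X J S A ω := by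
  have h := condExp_finsetSum (μ := P) (s := s)
    (fun A _ => integrable_indGv (J := J) P hS A) (mX X)
  simp only [Finset.sum_fn] at h
  exact h

lemma pscore_ae_eq_sum_egv (hX : Measurable X) (hS : ∀ z, Measurable (S z))
    (hS01 : ∀ z ω, S z ω = 0 ∨ S z ω = 1) {z : ℕ} (hz : z ≤ J + 1) :
    pscore P X S J z =ᵐ[P] fun ω => ∑ A ∈ survivingStrata J z, egv P X J S A ω := by
  refine Filter.EventuallyEq.trans ?_ (condExp_sum_indGv hS _)
  simp only [sum_indGv_survivingStrata hS01]
  unfold pscore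
  by_cases h0 : z = 0
  · simp [h0]
  by_cases hzJ : z ≤ J
  · simp [h0, hzJ, show z ≠ J + 1 by omega]
  · have hm : mX X ≤ ‹MeasurableSpace Ω› := hX.comap_le
    simp [show z = J + 1 by omega, condExp_const hm]

lemma pscore_sub_pscore_ae_eq (hX : Measurable X) (hS : ∀ z, Measurable (S z))
    (hS01 : ∀ z ω, S z ω = 0 ∨ S z ω = 1) {g : ℕ} (hg : g ≤ J) :
    (fun ω => pscore P X S J (J - g + 1) ω - pscore P X S J (J - g) ω)
      =ᵐ[P] fun ω => egv P X J S (monoPattern J g) ω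
        + (∑ A ∈ harmedSurvivingStrata J (J - g + 1), egv P X J S A ω
          - ∑ A ∈ harmedSurvivingStrata J (J - g), egv P X J S A ω) := by
  filter_upwards [pscore_ae_eq_sum_egv (P := P) (J := J) (z := J - g + 1) hX hS hS01 (by omega),
    pscore_ae_eq_sum_egv (P := P) (J := J) (z := J - g) hX hS hS01 (by omega)] with ω h₁ h₂
  rw [h₁, h₂, sum_survivingStrata _ (by omega), sum_survivingStrata _ (by omega),
    show J + 1 - (J - g + 1) = g by omega, show J + 1 - (J - g) = g + 1 by omega,
    ← Finset.insert_Icc_add_one_left_eq_Icc hg, Finset.sum_insert (by simp)]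
  ring

lemma egv_monoPattern_ae_eq (hX : Measurable X) (hS : ∀ z, Measurable (S z))
    (hS01 : ∀ z ω, S z ω = 0 ∨ S z ω = 1) {r : ℕ}
    (hr : ∀ᵐ ω ∂P, egv P X J S (monoPattern J r) ω ≠ 0) {g : ℕ} (hg : g ≤ J) :
    egv P X J S (monoPattern J g)
      =ᵐ[P] fun ω => pscore P X S J (J - g + 1) ω - pscore P X S J (J - g) ω
        - egv P X J S (monoPattern J r) ω
          * (qfun P X J r S (J - g + 1) ω - qfun P X J r S (J - g) ω) := by
  filter_upwards [pscore_sub_pscore_ae_eq hX hS hS01 hg, hr] with ω hp he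
  rw [hp, mul_sub, egv_mul_qfun he, egv_mul_qfun he]
  ring

end PrincipalScores

/-- **identification of principal scores without monotonicity.** -/
theorem statement18 (P : Measure Ω) [IsProbabilityMeasure P] (J : ℕ)
    (X : Ω → 𝒳) (Z : Ω → ℕ) (S Y : ℕ → Ω → ℝ)
    (hset : Setup P J X Z S Y)
    (r : ℕ) (hr : r ≤ J)
    (hc : ∃ c : ℝ, 0 < c ∧ ∀ᵐ ω ∂P, c ≤ egv P X J S (monoPattern J r) ω) :
    ((fun ω => egv P X J S (monoPattern J r) ω
        * (1 + qfun P X J r S (J - r + 1) ω - qfun P X J r S (J - r) ω))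
      =ᵐ[P] fun ω => pscore P X S J (J - r + 1) ω - pscore P X S J (J - r) ω) ∧
    (∀ A ∈ nonQ J,
      (fun ω => egv P X J S A ω
          * (1 + qfun P X J r S (J - r + 1) ω - qfun P X J r S (J - r) ω))
        =ᵐ[P] fun ω => rhoA P X J r S A ω
          * (pscore P X S J (J - r + 1) ω - pscore P X S J (J - r) ω)) ∧
    (∀ g ∈ Finset.Icc 0 J,
      egv P X J S (monoPattern J g)
        =ᵐ[P] fun ω => pscore P X S J (J - g + 1) ω - pscore P X S J (J - g) ω
          - egv P X J S (monoPattern J r) ω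
            * (qfun P X J r S (J - g + 1) ω - qfun P X J r S (J - g) ω)) := by
  obtain ⟨c, hc₀, hc⟩ := hc
  have hne : ∀ᵐ ω ∂P, egv P X J S (monoPattern J r) ω ≠ 0 :=
    hc.mono fun ω h => (hc₀.trans_le h).ne'
  have hmono {g : ℕ} (hg : g ≤ J) :=
    egv_monoPattern_ae_eq hset.hX hset.hSm hset.hS01 hne hg
  have part_a : (fun ω => egv P X J S (monoPattern J r) ω
      * (1 + qfun P X J r S (J - r + 1) ω - qfun P X J r S (J - r) ω))
      =ᵐ[P] fun ω => pscore P X S J (J - r + 1) ω - pscore P X S J (J - r) ω := by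
    filter_upwards [hmono hr] with ω h
    linear_combination h
  refine ⟨part_a, fun A _ => ?_, fun g hg => hmono (Finset.mem_Icc.mp hg).2⟩
  filter_upwards [part_a, hne] with ω ha he
  rw [← ha, rhoA]
  field_simp

end TruncationByDeath
end
end
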